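/- arXiv:2002.12194 — 4 statements merged into one kernel-verified Lean document; each statement's English description precedes it below -/
import Mathlib

section
/- Let g be the formal power series over ℚ given by g = Σ_{n≥0} (G n / n!)·Xⁿ. Then the formal derivative of g satisfies g′ = (1 + X)·g² in ℚ⟦X⟧ (and g has constant term 1). -/
/-!
Products and shifts of exponential generating functions are binomial convolutions:
`n! · [Xⁿ] (g · h)` is `∑ C(n, i) gᵢ hₙ₋ᵢ`, and `n! · [Xⁿ] (X · g²)` is `n` times the
`(n-1)`-st such convolution. Reindexed by `i ↦ i - 1`, with `(n - i) · C(n, i) = n · C(n-1, i)`,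
the recurrence says exactly that `G (n+1) / n!`, the coefficient of `Xⁿ` in `g'`, is the
coefficient of `Xⁿ` in `g² + X · g²`.
-/

open Finset hiding mk
open PowerSeries
open scoped Nat

section ExponentialGeneratingFunction

variable {K : Type*} [Field K] [CharZero K]

theorem mk_div_factorial_mul_mk_div_factorial (a b : ℕ → K) :
    mk (fun n => a n / n !) * mk (fun n => b n / n !) =
      mk (fun n => (∑ p ∈ antidiagonal n, n.choose p.1 * a p.1 * b p.2) / n !) := by
  ext n
  rw [coeff_mul, coeff_mk, sum_div]
  refine sum_congr rfl fun p hp => ?_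
  obtain rfl := mem_antidiagonal.1 hp
  have : ((p.1 + p.2)! : K) ≠ 0 := Nat.cast_ne_zero.2 (Nat.factorial_ne_zero _)
  rw [coeff_mk, coeff_mk, Nat.cast_add_choose]
  field_simp

theorem X_mul_mk_div_factorial (a : ℕ → K) :
    X * mk (fun n => a n / n !) = mk (fun n => n * a (n - 1) / n !) := by
  ext (_ | n)
  · simp
  · rw [coeff_succ_X_mul, coeff_mk, coeff_mk, Nat.factorial_succ, Nat.add_sub_cancel]
    push_cast
    field_simp

end ExponentialGeneratingFunction

theorem Finset.sum_Icc_one_eq_sum_range {M : Type*} [AddCommMonoid M] (f : ℕ → M) (n : ℕ) :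
    ∑ i ∈ Icc 1 n, f i = ∑ i ∈ range n, f (i + 1) := by
  rw [← Ico_add_one_right_eq_Icc, sum_Ico_eq_sum_range, Nat.add_sub_cancel]
  simp only [add_comm 1]

theorem succ_eq_sum_antidiagonal_choose (G : ℕ → ℕ)
    (hG : ∀ n : ℕ, 1 ≤ n →
      G n = (∑ i ∈ Finset.Icc 1 n,
              Nat.choose (n - 1) (i - 1) * G (n - i) * G (i - 1)) +
            (∑ i ∈ Finset.Icc 1 (n - 1),
              (n - i) * Nat.choose (n - 1) (i - 1) * G (n - i - 1) * G (i - 1)))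
    (n : ℕ) :
    G (n + 1) = ∑ p ∈ antidiagonal n, n.choose p.1 * G p.1 * G p.2 +
      n * ∑ p ∈ antidiagonal (n - 1), (n - 1).choose p.1 * G p.1 * G p.2 := by
  rw [hG (n + 1) n.succ_pos, Nat.add_sub_cancel]
  congr 1
  · rw [sum_Icc_one_eq_sum_range, Nat.sum_antidiagonal_eq_sum_range_succ_mk]
    refine sum_congr rfl fun i _ => ?_
    simp only [Nat.add_sub_add_right, Nat.add_sub_cancel, mul_right_comm _ (G (n - i))]
  · rcases n with _ | m
    · simp
    rw [sum_Icc_one_eq_sum_range, Nat.sum_antidiagonal_eq_sum_range_succ_mk, mul_sum,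
      Nat.add_sub_cancel]
    refine sum_congr rfl fun i _ => ?_
    simp only [Nat.add_sub_add_right, Nat.add_sub_cancel]
    rw [Nat.sub_right_comm, Nat.add_sub_cancel, mul_comm (m + 1 - i), ← Nat.choose_mul_succ_eq]
    ring

/-- The exponential generating function `g` of the sequence `G` counting complete
τ-exceptional sequences over `Γ_n^2` satisfies the ODE `g' = (1 + X) * g ^ 2`,
and has constant term `1`. -/
theorem egf_G_ode (G : ℕ → ℕ) (hG0 : G 0 = 1)
    (hG : ∀ n : ℕ, 1 ≤ n →
      G n = (∑ i ∈ Finset.Icc 1 n,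
              Nat.choose (n - 1) (i - 1) * G (n - i) * G (i - 1)) +
            (∑ i ∈ Finset.Icc 1 (n - 1),
              (n - i) * Nat.choose (n - 1) (i - 1) * G (n - i - 1) * G (i - 1)))
    (g : PowerSeries ℚ)
    (hg : g = PowerSeries.mk (fun n => (G n : ℚ) / (Nat.factorial n : ℚ))) :
    PowerSeries.mk (fun n =>
        ((n + 1 : ℕ) : ℚ) * PowerSeries.coeff (n + 1) g) =
      (1 + PowerSeries.X) * g ^ 2 ∧
    PowerSeries.constantCoeff g = 1 := by
  subst hg
  refine ⟨?_, by simp [hG0]⟩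
  rw [add_mul, one_mul, sq, mk_div_factorial_mul_mk_div_factorial, X_mul_mk_div_factorial]
  ext n
  rw [coeff_mk, coeff_mk, map_add, coeff_mk, coeff_mk, succ_eq_sum_antidiagonal_choose G hG n,
    Nat.factorial_succ]
  push_cast
  field_simp
end

section
/- Let h be the formal power series over ℚ given by h = Σ_{n≥0} (L n / n!)·Xⁿ. Then (1 − X − (1/2)·X²) · h = X + X² in ℚ⟦X⟧; equivalently, the exponential generating function of L is (x + x²)/(1 − x − x²/2). -/
/-!
Let `g` be the exponential generating function of `G`. Read through `g`, the recurrence for `G`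
says `g' = (1 + X) g²`, i.e. `(1 / g)' = -(1 + X)`; since `g(0) = 1` this forces
`1 / g = 1 - X - X² / 2`. The formula for `L` says that its exponential generating function is
`(X + X²) g`.
-/

open PowerSeries Finset Nat

def binomConv {R : Type*} [CommSemiring R] (a b : ℕ → R) (n : ℕ) : R :=
  ∑ k ∈ range (n + 1), n.choose k * a k * b (n - k)

theorem Nat.cast_binomConv {R : Type*} [CommSemiring R] (a b : ℕ → ℕ) (n : ℕ) :
    ((binomConv a b n : ℕ) : R) = binomConv (fun k => (a k : R)) (fun k => (b k : R)) n := by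
  simp [binomConv]

namespace PowerSeries

variable {K : Type*} [Field K]

def egf (a : ℕ → K) : K⟦X⟧ := mk fun n => a n / n !

@[simp]
theorem coeff_egf (a : ℕ → K) (n : ℕ) : coeff n (egf a) = a n / n ! := coeff_mk _ _

@[simp]
theorem constantCoeff_egf (a : ℕ → K) : constantCoeff (egf a) = a 0 := by
  simp [← coeff_zero_eq_constantCoeff_apply]

theorem egf_add (a b : ℕ → K) : egf (a + b) = egf a + egf b := by
  ext n
  simp [add_div]

variable [CharZero K]

theorem egf_mul_egf (a b : ℕ → K) :
    egf a * egf b = egf (binomConv a b) := by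
  ext n
  rw [coeff_mul, Nat.sum_antidiagonal_eq_sum_range_succ_mk, coeff_egf, binomConv, sum_div]
  refine sum_congr rfl fun k hk => ?_
  have hkn : k ≤ n := Nat.lt_succ_iff.mp (mem_range.mp hk)
  rw [coeff_egf, coeff_egf, cast_choose K hkn]
  field_simp
  exact (mul_div_mul_right _ _ (cast_ne_zero.mpr (factorial_ne_zero n))).symm

theorem derivative_egf (a : ℕ → K) : d⁄dX K (egf a) = egf fun n => a (n + 1) := by
  ext n
  rw [coeff_derivative, coeff_egf, coeff_egf, factorial_succ]
  push_cast
  field_simp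

theorem X_mul_egf (a : ℕ → K) : X * egf a = egf fun n => n * a (n - 1) := by
  ext (_ | n)
  · simp
  · rw [coeff_succ_X_mul, coeff_egf, coeff_egf, factorial_succ]
    push_cast
    field_simp

theorem mul_eq_one_of_derivative_eq {f q p : K⟦X⟧} (hf : d⁄dX K f = p * f ^ 2)
    (hq : d⁄dX K q = -p) (h0 : constantCoeff q * constantCoeff f = 1) : q * f = 1 := by
  have hf0 : constantCoeff f ≠ 0 := right_ne_zero_of_mul_eq_one h0
  have hinv : f⁻¹ * f = 1 := PowerSeries.inv_mul_cancel f hf0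
  suffices q = f⁻¹ by rw [this, hinv]
  refine derivative.ext ?_ ?_
  · rw [hq, derivative_inv', hf]
    linear_combination p * (f⁻¹ * f + 1) * hinv
  · rw [constantCoeff_inv]
    exact eq_inv_of_mul_eq_one_left h0

end PowerSeries

section Recurrence

variable (G : ℕ → ℕ)

theorem sum_Icc_choose_eq_binomConv (m : ℕ) :
    ∑ i ∈ Icc 1 (m + 1), m.choose (i - 1) * G (m + 1 - i) * G (i - 1) = binomConv G G m := by
  rw [← Ico_add_one_right_eq_Icc, sum_Ico_eq_sum_range, binomConv]
  refine sum_congr rfl fun k hk => ?_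
  rw [show 1 + k - 1 = k by omega, show m + 1 - (1 + k) = m - k by omega, Nat.cast_id]
  ring

theorem sum_Icc_sub_mul_choose_eq_binomConv (m : ℕ) :
    ∑ i ∈ Icc 1 m, (m + 1 - i) * m.choose (i - 1) * G (m + 1 - i - 1) * G (i - 1) =
      m * binomConv G G (m - 1) := by
  rcases m with _ | p
  · simp
  rw [← Ico_add_one_right_eq_Icc, sum_Ico_eq_sum_range, binomConv, mul_sum]
  simp only [add_tsub_cancel_right]
  refine sum_congr rfl fun k hk => ?_
  rw [show 1 + k - 1 = k by omega, show p + 1 + 1 - (1 + k) = p + 1 - k by omega,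
    show p + 1 - k - 1 = p - k by omega, Nat.cast_id, mul_comm (p + 1 - k),
    ← p.choose_mul_succ_eq k]
  ring

variable {G}

theorem succ_eq_binomConv_of_recurrence
    (hG : ∀ n : ℕ, 1 ≤ n →
      G n = (∑ i ∈ Icc 1 n, Nat.choose (n - 1) (i - 1) * G (n - i) * G (i - 1)) +
            (∑ i ∈ Icc 1 (n - 1),
              (n - i) * Nat.choose (n - 1) (i - 1) * G (n - i - 1) * G (i - 1)))
    (m : ℕ) : G (m + 1) = binomConv G G m + m * binomConv G G (m - 1) := by
  rw [hG (m + 1) m.succ_pos, add_tsub_cancel_right, sum_Icc_choose_eq_binomConv,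
    sum_Icc_sub_mul_choose_eq_binomConv]

end Recurrence

namespace PowerSeries

variable {K : Type*} [Field K] [CharZero K]

theorem derivative_egf_eq_of_succ_eq {a : ℕ → K}
    (ha : ∀ m, a (m + 1) = binomConv a a m + m * binomConv a a (m - 1)) :
    d⁄dX K (egf a) = (1 + X) * egf a ^ 2 := by
  rw [derivative_egf, add_mul, one_mul, sq, egf_mul_egf, X_mul_egf, ← egf_add]
  exact congrArg egf (funext ha)

theorem egf_eq_X_add_X_sq_mul_egf {G L : ℕ → ℕ} (hL0 : L 0 = 0)
    (hL : ∀ n : ℕ, 1 ≤ n → L n = n * G (n - 1) + n * (n - 1) * G (n - 2)) :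
    egf (fun n => (L n : K)) = (X + X ^ 2) * egf fun n => (G n : K) := by
  rw [add_mul, sq, mul_assoc, X_mul_egf, X_mul_egf, ← egf_add]
  congr 1
  funext n
  rcases Nat.eq_zero_or_pos n with rfl | hn
  · simp [hL0]
  · rw [Pi.add_apply, hL n hn, show n - 1 - 1 = n - 2 by omega]
    push_cast
    ring

end PowerSeries

/-- The exponential generating function of the sequence `L` counting complete
τ-exceptional sequences over `Λ_n^2` is `(x + x²) / (1 - x - x²/2)`. -/
theorem egf_L (G : ℕ → ℕ) (hG0 : G 0 = 1)
    (hG : ∀ n : ℕ, 1 ≤ n →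
      G n = (∑ i ∈ Finset.Icc 1 n,
              Nat.choose (n - 1) (i - 1) * G (n - i) * G (i - 1)) +
            (∑ i ∈ Finset.Icc 1 (n - 1),
              (n - i) * Nat.choose (n - 1) (i - 1) * G (n - i - 1) * G (i - 1)))
    (L : ℕ → ℕ) (hL0 : L 0 = 0)
    (hL : ∀ n : ℕ, 1 ≤ n →
      L n = n * G (n - 1) + n * (n - 1) * G (n - 2)) :
    (1 - PowerSeries.X - PowerSeries.C (1 / 2 : ℚ) * PowerSeries.X ^ 2) *
      PowerSeries.mk (fun n => (L n : ℚ) / (Nat.factorial n : ℚ)) =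
      PowerSeries.X + PowerSeries.X ^ 2 := by
  set g : ℚ⟦X⟧ := egf fun n => (G n : ℚ)
  set q : ℚ⟦X⟧ := 1 - X - C (1 / 2 : ℚ) * X ^ 2
  have hq : d⁄dX ℚ q = -(1 + X) := by
    have hC : C (1 / 2 : ℚ) * 2 = 1 := by rw [← map_ofNat C 2, ← map_mul]; norm_num
    simp only [q, map_sub, derivative_one, derivative_X, Derivation.leibniz, derivative_pow,
      derivative_C, smul_eq_mul]
    linear_combination (-X) * hC
  have hg : d⁄dX ℚ g = (1 + X) * g ^ 2 :=
    derivative_egf_eq_of_succ_eq fun m => by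
      push_cast [succ_eq_binomConv_of_recurrence hG m, Nat.cast_binomConv]
      rfl
  have hqg : q * g = 1 := mul_eq_one_of_derivative_eq hg hq (by simp [q, g, hG0])
  change q * egf (fun n => (L n : ℚ)) = _
  rw [egf_eq_X_add_X_sq_mul_egf hL0 hL, mul_left_comm, hqg, mul_one]
end

section
/- For every natural number n ≥ 1, nⁿ = n · Σ_{i=1}^{n} C(n−1, i−1) · i^(i−2) · (n−i)^(n−i), where all exponents use truncated natural-number subtraction (so the i = 1 term has i^(i−2) = 1^0 = 1, consistent with the intended value 1^(−1) = 1, and the i = n term has (n−i)^(n−i) = 0^0 = 1). -/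
/-!
After the shift `i = k + 1`, `n = m + 1`, the identity is the case `x = m` of
`A_m(x) := ∑ₖ C(m,k) (k+1)^(k-1) (x-k)^(m-k) = (x+1)^m`, an instance of Abel's identity.
Both sides satisfy `A_{m+1}' = (m+1) A_m`, so by induction it suffices that `A_{m+1}` vanishes
at `x = -1`, like `(x+1)^(m+1)`. Termwise, `A_{m+1}(-1)` is the `(m+1)`-st finite difference of
`k ↦ (k+1)^m` at `0`, which is zero since that function is a polynomial of degree `m`.
-/

open Finset Polynomial

theorem sum_range_alternating_choose_mul_add_pow_eq_zero {R : Type*} [CommRing R]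
    {n j : ℕ} (h : j < n) (a : R) :
    ∑ k ∈ range (n + 1), (-1) ^ (n - k) * (n.choose k : R) * ((k : R) + a) ^ j = 0 := by
  have hΔ := fwdDiff_iter_comp_add (1 : R) (fun r ↦ r ^ j) a n 0
  rw [fwdDiff_iter_pow_eq_zero_of_lt h, fwdDiff_iter_eq_sum_shift] at hΔ
  simpa [zsmul_eq_mul] using hΔ

noncomputable def abelPoly (n : ℕ) : ℚ[X] :=
  ∑ k ∈ range (n + 1), C ((n.choose k : ℚ) * (k + 1) ^ (k - 1)) * (X - C (k : ℚ)) ^ (n - k)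

theorem derivative_abelPoly_succ (n : ℕ) :
    derivative (abelPoly (n + 1)) = C ((n + 1 : ℕ) : ℚ) * abelPoly n := by
  rw [abelPoly, abelPoly, derivative_sum, sum_range_succ, Nat.sub_self, pow_zero, mul_one,
    derivative_C, add_zero, mul_sum]
  refine sum_congr rfl fun k _ ↦ ?_
  have hchoose : ((n + 1).choose k : ℚ) * (n + 1 - k : ℕ) = (n + 1 : ℕ) * n.choose k := by
    exact_mod_cast (Nat.choose_mul_succ_eq n k).symm.trans (mul_comm _ _)
  rw [derivative_C_mul, derivative_X_sub_C_pow, show n + 1 - k - 1 = n - k by omega]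
  simp only [← C_mul, ← mul_assoc]
  congr 2
  rw [mul_right_comm, hchoose]

theorem abelPoly_succ_eval_neg_one (n : ℕ) : (abelPoly (n + 1)).eval (-1) = 0 := by
  rw [← sum_range_alternating_choose_mul_add_pow_eq_zero (Nat.lt_succ_self n) (1 : ℚ),
    abelPoly, eval_finsetSum]
  refine sum_congr rfl fun k hk ↦ ?_
  have hkn : k ≤ n + 1 := Nat.lt_succ_iff.mp (mem_range.mp hk)
  have hpow : ((k : ℚ) + 1) ^ (k - 1) * ((k : ℚ) + 1) ^ (n + 1 - k) = ((k : ℚ) + 1) ^ n := by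
    rcases k with _ | k
    · simp
    · rw [← pow_add]; congr 1; omega
  simp only [eval_mul, eval_C, eval_pow, eval_sub, eval_X]
  rw [show (-1 - (k : ℚ)) = -1 * ((k : ℚ) + 1) by ring, mul_pow, ← hpow]
  ring

theorem abelPoly_eq (n : ℕ) : abelPoly n = (X + C 1) ^ n := by
  induction n with
  | zero => simp [abelPoly]
  | succ n ih =>
    have hderiv : derivative (abelPoly (n + 1) - (X + C 1) ^ (n + 1)) = 0 := by
      rw [derivative_sub, derivative_abelPoly_succ, ih, derivative_X_add_C_pow]
      simp
    have hconst := eq_C_of_derivative_eq_zero hderiv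
    have hval := congrArg (eval (-1 : ℚ)) hconst
    rw [eval_sub, abelPoly_succ_eval_neg_one, eval_C] at hval
    rw [← sub_eq_zero, hconst, ← hval]
    simp

theorem sum_choose_mul_succ_pow_mul_sub_pow (m : ℕ) :
    ∑ k ∈ range (m + 1), m.choose k * (k + 1) ^ (k - 1) * (m - k) ^ (m - k) = (m + 1) ^ m := by
  have h := congrArg (eval (m : ℚ)) (abelPoly_eq m)
  simp only [abelPoly, eval_finsetSum, eval_mul, eval_C, eval_pow, eval_sub, eval_add,
    eval_X] at h
  rw [sum_congr rfl fun k hk ↦ by rw [← Nat.cast_sub (Nat.lt_succ_iff.mp (mem_range.mp hk))]] at h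
  exact_mod_cast h

/-- The sequence `n ^ n` satisfies the recurrence for the number of complete
τ-exceptional sequences over `Λ_n^n`:
`n^n = n * Σ_{i=1}^n C(n-1, i-1) * i^(i-2) * (n-i)^(n-i)` for every `n ≥ 1`. -/
theorem pow_self_recurrence :
    ∀ n : ℕ, 1 ≤ n →
      n ^ n = n * ∑ i ∈ Finset.Icc 1 n,
        Nat.choose (n - 1) (i - 1) * i ^ (i - 2) * (n - i) ^ (n - i) := by
  intro n hn
  obtain ⟨m, rfl⟩ := Nat.exists_eq_add_of_le' hn
  have hshift : ∑ i ∈ Icc 1 (m + 1), m.choose (i - 1) * i ^ (i - 2) * (m + 1 - i) ^ (m + 1 - i) =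
      ∑ k ∈ range (m + 1), m.choose k * (k + 1) ^ (k - 1) * (m - k) ^ (m - k) := by
    rw [← Ico_add_one_right_eq_Icc, sum_Ico_eq_sum_range]
    refine sum_congr (by simp) fun k _ ↦ ?_
    rw [show 1 + k - 2 = k - 1 by omega, show m + 1 - (1 + k) = m - k by omega]
    simp [add_comm]
  rw [Nat.add_sub_cancel, hshift, sum_choose_mul_succ_pow_mul_sub_pow, pow_succ']
end

section
/- Let f be the formal power series over ℚ given by f = Σ_{n≥0} (F n / n!)·Xⁿ, where F n is the number of ordered set partitions of an n-element set into blocks of size at most 2. Then (1 − X − (1/2)·X²) · f = 1 in ℚ⟦X⟧; equivalently, the exponential generating function of F is 1/(1 − x − x²/2). -/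
/-!
Removing the first block of an ordered partition of an `n`-set into blocks of size at most `2`
leaves such a partition of the remaining `n - 1` or `n - 2` elements, so
`F (n + 2) = (n + 2) F (n + 1) + C(n + 2, 2) F n`. For `a n = F n / n!` this reads
`a (n + 2) = a (n + 1) + a n / 2`, together with `a 0 = a 1 = 1`, which is the coefficientwise
form of `(1 - X - X² / 2) f = 1`.
-/

/-- `F n` is the number of ordered set partitions of `Fin n` with blocks of
size at most `2` (the restricted Fubini number `F_{n, ≤ 2}`). -/
noncomputable def restrictedFubini (n : ℕ) : ℕ :=
  Nat.card {B : List (Finset (Fin n)) //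
    (∀ b ∈ B, b.Nonempty ∧ b.card ≤ 2) ∧
    B.Pairwise Disjoint ∧
    B.foldr (· ∪ ·) ∅ = Finset.univ}

open Finset

section OrderedPartition

variable {α : Type*}

def admissibleBlocks (k : ℕ) (s : Finset α) : Finset (Finset α) :=
  {b ∈ s.powerset | b.Nonempty ∧ b.card ≤ k}

lemma sum_admissibleBlocks_card {M : Type*} [AddCommMonoid M] (k : ℕ) (s : Finset α)
    (f : ℕ → M) :
    ∑ b ∈ admissibleBlocks k s, f b.card =
      ∑ j ∈ range k, s.card.choose (j + 1) • f (j + 1) := by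
  rw [← sum_fiberwise_of_maps_to (g := fun b => b.card - 1) (t := range k)]
  · refine sum_congr rfl fun j hj => ?_
    have hfiber : {b ∈ admissibleBlocks k s | b.card - 1 = j} = s.powersetCard (j + 1) := by
      ext b
      simp only [admissibleBlocks, mem_filter, mem_powerset, mem_powersetCard, ← card_pos]
      have := mem_range.mp hj
      constructor
      · rintro ⟨⟨hbs, hpos, -⟩, hb⟩
        exact ⟨hbs, by omega⟩
      · rintro ⟨hbs, hb⟩
        exact ⟨⟨hbs, by omega, by omega⟩, by omega⟩
    rw [hfiber, ← card_powersetCard, ← sum_const]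
    exact sum_congr rfl fun b hb => by rw [(mem_powersetCard.mp hb).2]
  · intro b hb
    simp only [admissibleBlocks, mem_filter, ← card_pos] at hb
    exact mem_range.mpr (show b.card - 1 < k by omega)

variable [DecidableEq α]

def IsOrderedPartition (k : ℕ) (s : Finset α) (B : List (Finset α)) : Prop :=
  (∀ b ∈ B, b.Nonempty ∧ b.card ≤ k) ∧ B.Pairwise Disjoint ∧ B.foldr (· ∪ ·) ∅ = s

lemma mem_foldr_union {B : List (Finset α)} {x : α} :
    x ∈ B.foldr (· ∪ ·) ∅ ↔ ∃ c ∈ B, x ∈ c := by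
  induction B with
  | nil => simp
  | cons b B ih => simp [ih]

lemma isOrderedPartition_cons_iff {k : ℕ} {s b : Finset α} {B : List (Finset α)} :
    IsOrderedPartition k s (b :: B) ↔
      b ∈ admissibleBlocks k s ∧ IsOrderedPartition k (s \ b) B := by
  simp only [IsOrderedPartition, admissibleBlocks, List.forall_mem_cons, List.pairwise_cons,
    List.foldr_cons, mem_filter, mem_powerset]
  constructor
  · rintro ⟨⟨hb, hB⟩, ⟨hdisj, hpw⟩, rfl⟩
    have hdisj' : Disjoint b (B.foldr (· ∪ ·) ∅) := by
      simp only [disjoint_left, mem_foldr_union]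
      rintro x hx ⟨c, hc, hxc⟩
      exact disjoint_left.mp (hdisj c hc) hx hxc
    exact ⟨⟨subset_union_left, hb⟩, hB, hpw, (union_sdiff_cancel_left hdisj').symm⟩
  · rintro ⟨⟨hbs, hb⟩, hB, hpw, hU⟩
    refine ⟨⟨hb, hB⟩, ⟨fun c hc => ?_, hpw⟩, by rw [hU, union_sdiff_of_subset hbs]⟩
    have hcs : c ⊆ s \ b := fun x hx => hU ▸ mem_foldr_union.mpr ⟨c, hc, hx⟩
    exact disjoint_sdiff.mono_right hcs

lemma isOrderedPartition_empty_iff {k : ℕ} {B : List (Finset α)} :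
    IsOrderedPartition k ∅ B ↔ B = [] := by
  refine ⟨fun h => ?_, fun h => by simp [h, IsOrderedPartition]⟩
  cases B with
  | nil => rfl
  | cons b B =>
    obtain ⟨hb, -⟩ := isOrderedPartition_cons_iff.mp h
    simp only [admissibleBlocks, mem_filter, mem_powerset, subset_empty] at hb
    exact absurd hb.1 hb.2.1.ne_empty

def orderedPartitionConsEquiv (k : ℕ) {s : Finset α} (hs : s.Nonempty) :
    {B // IsOrderedPartition k s B} ≃
      Σ b : admissibleBlocks k s, {B // IsOrderedPartition k (s \ b) B} where
  toFun
    | ⟨[], h⟩ => absurd h.2.2.symm hs.ne_empty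
    | ⟨b :: B, h⟩ =>
      have h := isOrderedPartition_cons_iff.mp h
      ⟨⟨b, h.1⟩, ⟨B, h.2⟩⟩
  invFun x := ⟨x.1.1 :: x.2.1, isOrderedPartition_cons_iff.mpr ⟨x.1.2, x.2.2⟩⟩
  left_inv
    | ⟨[], h⟩ => absurd h.2.2.symm hs.ne_empty
    | ⟨_ :: _, _⟩ => rfl
  right_inv _ := rfl

lemma sdiff_ssubset_of_mem_admissibleBlocks {k : ℕ} {s b : Finset α}
    (hb : b ∈ admissibleBlocks k s) : s \ b ⊂ s :=
  have hb := mem_filter.mp hb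
  sdiff_ssubset (mem_powerset.mp hb.1) hb.2.1

instance finite_isOrderedPartition (k : ℕ) (s : Finset α) :
    Finite {B // IsOrderedPartition k s B} := by
  induction s using Finset.strongInduction with
  | H s ih =>
    rcases s.eq_empty_or_nonempty with rfl | hs
    · simp only [isOrderedPartition_empty_iff]
      infer_instance
    · have (b : admissibleBlocks k s) : Finite {B // IsOrderedPartition k (s \ b) B} :=
        ih _ (sdiff_ssubset_of_mem_admissibleBlocks b.2)
      exact Finite.of_equiv _ (orderedPartitionConsEquiv k hs).symm

lemma card_isOrderedPartition_eq_sum {k : ℕ} {s : Finset α} (hs : s.Nonempty) :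
    Nat.card {B // IsOrderedPartition k s B} =
      ∑ b ∈ admissibleBlocks k s, Nat.card {B // IsOrderedPartition k (s \ b) B} := by
  rw [Nat.card_congr (orderedPartitionConsEquiv k hs), Nat.card_sigma,
    sum_coe_sort (admissibleBlocks k s) fun b => Nat.card {B // IsOrderedPartition k (s \ b) B}]

end OrderedPartition

-- For `j > n` the binomial coefficient vanishes, so the truncation in `n - j` is harmless.
def boundedFubini (k : ℕ) : ℕ → ℕ
  | 0 => 1
  | n + 1 => ∑ j ∈ range k, (n + 1).choose (j + 1) * boundedFubini k (n - j)

theorem card_isOrderedPartition {α : Type*} [DecidableEq α] (k : ℕ) (s : Finset α) :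
    Nat.card {B // IsOrderedPartition k s B} = boundedFubini k s.card := by
  induction s using Finset.strongInduction with
  | H s ih =>
    rcases s.eq_empty_or_nonempty with rfl | hs
    · simp [isOrderedPartition_empty_iff, boundedFubini]
    · obtain ⟨n, hn⟩ := Nat.exists_eq_succ_of_ne_zero hs.card_pos.ne'
      have hterm (b) (hb : b ∈ admissibleBlocks k s) :
          Nat.card {B // IsOrderedPartition k (s \ b) B} =
            boundedFubini k (n - (b.card - 1)) := by
        rw [ih _ (sdiff_ssubset_of_mem_admissibleBlocks hb),
          card_sdiff_of_subset (mem_powerset.mp (mem_filter.mp hb).1)]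
        have := (mem_filter.mp hb).2.1.card_pos
        congr 1
        omega
      rw [card_isOrderedPartition_eq_sum hs, sum_congr rfl hterm,
        sum_admissibleBlocks_card k s fun m => boundedFubini k (n - (m - 1)), hn, boundedFubini]
      simp only [smul_eq_mul, Nat.add_sub_cancel]

lemma boundedFubini_two_add_two (n : ℕ) :
    boundedFubini 2 (n + 2) =
      (n + 2) * boundedFubini 2 (n + 1) + (n + 2).choose 2 * boundedFubini 2 n := by
  simp [boundedFubini, sum_range_succ]

lemma boundedFubini_two_div_factorial_add_two (n : ℕ) :
    (boundedFubini 2 (n + 2) / (n + 2).factorial : ℚ) =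
      boundedFubini 2 (n + 1) / (n + 1).factorial + 1 / 2 * (boundedFubini 2 n / n.factorial) := by
  rw [boundedFubini_two_add_two, Nat.factorial_succ, Nat.factorial_succ]
  push_cast [Nat.cast_choose_two]
  field_simp
  ring

namespace PowerSeries

theorem one_sub_sub_mul_mk_eq_one {R : Type*} [CommRing R] {p q : R} {a : ℕ → R}
    (h0 : a 0 = 1) (h1 : a 1 = p) (h : ∀ n, a (n + 2) = p * a (n + 1) + q * a n) :
    (1 - C p * X - C q * X ^ 2) * mk a = 1 := by
  ext n
  rw [sub_mul, sub_mul, one_mul, mul_assoc, mul_assoc, map_sub, map_sub, coeff_C_mul,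
    coeff_C_mul, coeff_one]
  rcases n with _ | _ | n
  · simp [h0]
  · simp [h0, h1, coeff_X_pow_mul']
  · rw [coeff_succ_X_mul, coeff_X_pow_mul', coeff_mk, coeff_mk, if_pos (by omega), h]
    simp

end PowerSeries

/-- The exponential generating function of the restricted Fubini numbers
`F_{n, ≤ 2}` is `1 / (1 - x - x²/2)`. -/
theorem egf_restrictedFubini :
    (1 - PowerSeries.X - PowerSeries.C (1 / 2 : ℚ) * PowerSeries.X ^ 2) *
      PowerSeries.mk (fun n => (restrictedFubini n : ℚ) / (Nat.factorial n : ℚ)) = 1 := by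
  have hF (n : ℕ) : restrictedFubini n = boundedFubini 2 n :=
    (card_isOrderedPartition 2 (univ : Finset (Fin n))).trans (by rw [card_univ, Fintype.card_fin])
  simp_rw [hF]
  simpa using PowerSeries.one_sub_sub_mul_mk_eq_one (p := (1 : ℚ)) (q := 1 / 2)
    (a := fun n => (boundedFubini 2 n : ℚ) / n.factorial) (by simp [boundedFubini])
    (by simp [boundedFubini, sum_range_succ])
    (by simpa using boundedFubini_two_div_factorial_add_two)
end
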